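/- Let a, b, c, d, a', b', c', d' be an enumeration of the eight vertices of CQ_3 such that each of the sets {a, b, c, d}, {a', b', c', d'}, {a, b, a', b'} and {c, d, c', d'} induces a 4-cycle in CQ_3, with ⟨{a, b, c, d}⟩ being the cycle a-b-c-d-a and ⟨{a', b', c', d'}⟩ being the cycle a'-b'-c'-d'-a'. Then either all four of aa', bb', cd', dc' are edges of CQ_3, or all four of ab', ba', cc', dd' are edges of CQ_3. -/

import Mathlib

/-
The set `{a, b, a', b'}` is an induced 4-cycle through the edge `ab`, so `ab` is joined to `a'b'`
either straight (`aa'`, `bb'`) or crossed (`ab'`, `ba'`). After relabelling the second square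
as `b'-a'-d'-c'-b'` the crossed case becomes the straight one, and then the edges from `c, d` must
be twisted (`cd'`, `dc'`): otherwise the two squares and the four rungs would form the bipartite
prism `C₄ □ K₂`, whereas `CQ_3` contains the 5-cycle `000-001-111-110-010`. This last fact is
checked by exhaustive search.
-/

/-- Vertices of the 3-dimensional cubes: binary strings `x1x2x3` of length 3. -/
abbrev Vtx3 := Bool × Bool × Bool

/-- The 12 edges of the 3-dimensional crossed cube `CQ_3`. -/
def cq3EdgeList : List (Vtx3 × Vtx3) :=
  [ ((false,false,false),(false,false,true)),
    ((false,true,false),(false,true,true)),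
    ((true,false,false),(true,false,true)),
    ((true,true,false),(true,true,true)),
    ((false,false,false),(false,true,false)),
    ((false,false,true),(false,true,true)),
    ((true,false,false),(true,true,false)),
    ((true,false,true),(true,true,true)),
    ((false,false,false),(true,false,false)),
    ((false,true,false),(true,true,false)),
    ((false,false,true),(true,true,true)),
    ((false,true,true),(true,false,true)) ]

/-- The 3-dimensional crossed cube `CQ_3`. -/
def CQ3 : SimpleGraph Vtx3 where
  Adj u v := (u, v) ∈ cq3EdgeList ∨ (v, u) ∈ cq3EdgeList
  symm := ⟨fun _ _ h => Or.symm h⟩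
  loopless := by
    constructor
    intro x
    revert x
    decide

instance : DecidableRel CQ3.Adj :=
  fun u v => inferInstanceAs (Decidable ((u, v) ∈ cq3EdgeList ∨ (v, u) ∈ cq3EdgeList))

namespace SimpleGraph

variable {V : Type*} {G : SimpleGraph V} {x y u v : V}

theorem nodup_of_induce_iso_cycleGraph_four (f : G.induce {x, y, u, v} ≃g cycleGraph 4) :
    [x, y, u, v].Nodup := by
  classical
  have hset : (([x, y, u, v].toFinset : Finset V) : Set V) = {x, y, u, v} := by ext; simp
  have hcard : [x, y, u, v].toFinset.card = [x, y, u, v].length := by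
    rw [← Set.ncard_coe_finset, hset, ← Nat.card_coe_set_eq, Nat.card_congr f.toEquiv]
    simp
  exact Multiset.coe_nodup.mp (Multiset.toFinset_card_eq_card_iff_nodup.mp hcard)

theorem adj_and_adj_or_adj_and_adj_of_induce_iso_cycleGraph_four
    (f : G.induce {x, y, u, v} ≃g cycleGraph 4) (hxy : G.Adj x y) :
    (G.Adj x u ∧ G.Adj y v) ∨ (G.Adj x v ∧ G.Adj y u) := by
  have cycleGraph_four : ∀ p q r s : Fin 4, [p, q, r, s].Nodup → (cycleGraph 4).Adj p q →
      ((cycleGraph 4).Adj p r ∧ (cycleGraph 4).Adj q s) ∨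
        ((cycleGraph 4).Adj p s ∧ (cycleGraph 4).Adj q r) := by
    decide
  let S : Set V := {x, y, u, v}
  let X : S := ⟨x, by simp [S]⟩
  let Y : S := ⟨y, by simp [S]⟩
  let U : S := ⟨u, by simp [S]⟩
  let W : S := ⟨v, by simp [S]⟩
  have hnd : [X, Y, U, W].Nodup :=
    List.Nodup.of_map Subtype.val (nodup_of_induce_iso_cycleGraph_four f)
  have h := cycleGraph_four (f X) (f Y) (f U) (f W) (hnd.map f.injective) (f.map_adj_iff.mpr hxy)
  simp only [f.map_adj_iff] at h
  exact h

end SimpleGraph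

/- The quantifiers are interleaved with the adjacency hypotheses so that `decide` prunes the
search over `Vtx3⁸` early. -/
set_option synthInstance.maxSize 2000 in
theorem cq3_adj_twisted_of_adj_of_adj :
    ∀ a b, CQ3.Adj a b → ∀ c, CQ3.Adj b c → ∀ d, CQ3.Adj c d → CQ3.Adj d a →
    ∀ a', CQ3.Adj a a' → ∀ b', CQ3.Adj b b' → CQ3.Adj a' b' →
    ∀ c', CQ3.Adj b' c' → ∀ d', CQ3.Adj c' d' → CQ3.Adj d' a' →
    [a, b, c, d, a', b', c', d'].Nodup → CQ3.Adj c d' ∧ CQ3.Adj d c' := by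
  decide +kernel

theorem cq3_matching_structure_general (a b c d a' b' c' d' : Vtx3)
    (henum : ([a, b, c, d, a', b', c', d'] : List Vtx3).Nodup)
    (hcyc : CQ3.Adj a b ∧ CQ3.Adj b c ∧ CQ3.Adj c d ∧ CQ3.Adj d a ∧
      ¬CQ3.Adj a c ∧ ¬CQ3.Adj b d)
    (hcyc' : CQ3.Adj a' b' ∧ CQ3.Adj b' c' ∧ CQ3.Adj c' d' ∧ CQ3.Adj d' a' ∧
      ¬CQ3.Adj a' c' ∧ ¬CQ3.Adj b' d')
    (h3 : Nonempty (CQ3.induce ({a, b, a', b'} : Set Vtx3) ≃g SimpleGraph.cycleGraph 4)) :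
    (CQ3.Adj a a' ∧ CQ3.Adj b b' ∧ CQ3.Adj c d' ∧ CQ3.Adj d c') ∨
    (CQ3.Adj a b' ∧ CQ3.Adj b a' ∧ CQ3.Adj c c' ∧ CQ3.Adj d d') := by
  obtain ⟨hab, hbc, hcd, hda, -, -⟩ := hcyc
  obtain ⟨ha'b', hb'c', hc'd', hd'a', -, -⟩ := hcyc'
  obtain ⟨f⟩ := h3
  rcases SimpleGraph.adj_and_adj_or_adj_and_adj_of_induce_iso_cycleGraph_four f hab with
    ⟨haa', hbb'⟩ | ⟨hab', hba'⟩
  · exact .inl ⟨haa', hbb', cq3_adj_twisted_of_adj_of_adj a b hab c hbc d hcd hda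
      a' haa' b' hbb' ha'b' c' hb'c' d' hc'd' hd'a' henum⟩
  · have hperm : [a, b, c, d, a', b', c', d'].Perm [a, b, c, d, b', a', d', c'] :=
      .append_left [a, b, c, d] <|
        (List.Perm.swap b' a' [c', d']).trans (((List.Perm.swap d' c' []).cons a').cons b')
    obtain ⟨hcc', hdd'⟩ := cq3_adj_twisted_of_adj_of_adj a b hab c hbc d hcd hda
      b' hab' a' hba' ha'b'.symm d' hd'a'.symm c' hc'd'.symm hb'c'.symm (henum.perm hperm)
    exact .inr ⟨hab', hba', hcc', hdd'⟩

/-- If `a, b, c, d, a', b', c', d'` is an enumeration of the eight vertices of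
`CQ_3` such that `{a,b,c,d}`, `{a',b',c',d'}`, `{a,b,a',b'}` and `{c,d,c',d'}`
each induce a 4-cycle, where `⟨{a,b,c,d}⟩` is the cycle `a-b-c-d-a` and
`⟨{a',b',c',d'}⟩` is the cycle `a'-b'-c'-d'-a'`, then either all of
`aa', bb', cd', dc'` are edges, or all of `ab', ba', cc', dd'` are edges. -/
theorem cq3_matching_structure (a b c d a' b' c' d' : Vtx3)
    (henum : ([a, b, c, d, a', b', c', d'] : List Vtx3).Nodup)
    (hcyc : CQ3.Adj a b ∧ CQ3.Adj b c ∧ CQ3.Adj c d ∧ CQ3.Adj d a ∧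
      ¬CQ3.Adj a c ∧ ¬CQ3.Adj b d)
    (hcyc' : CQ3.Adj a' b' ∧ CQ3.Adj b' c' ∧ CQ3.Adj c' d' ∧ CQ3.Adj d' a' ∧
      ¬CQ3.Adj a' c' ∧ ¬CQ3.Adj b' d')
    (h1 : Nonempty (CQ3.induce ({a, b, c, d} : Set Vtx3) ≃g SimpleGraph.cycleGraph 4))
    (h2 : Nonempty (CQ3.induce ({a', b', c', d'} : Set Vtx3) ≃g SimpleGraph.cycleGraph 4))
    (h3 : Nonempty (CQ3.induce ({a, b, a', b'} : Set Vtx3) ≃g SimpleGraph.cycleGraph 4))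
    (h4 : Nonempty (CQ3.induce ({c, d, c', d'} : Set Vtx3) ≃g SimpleGraph.cycleGraph 4)) :
    (CQ3.Adj a a' ∧ CQ3.Adj b b' ∧ CQ3.Adj c d' ∧ CQ3.Adj d c') ∨
    (CQ3.Adj a b' ∧ CQ3.Adj b a' ∧ CQ3.Adj c c' ∧ CQ3.Adj d d') :=
  cq3_matching_structure_general a b c d a' b' c' d' henum hcyc hcyc' h3
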